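/- arXiv:2605.17744 — 2 statements merged into one kernel-verified Lean document; each statement's English description precedes it below -/
import Mathlib

section
/- Let N be a positive even integer and set N† = 2N. Let Δx > 0, Δτ > 0, C ≥ 0 and ε_e ≥ 0 be real numbers. Let g̃ : ℤ → ℝ be N†-periodic, i.e. g̃(ℓ + N†) = g̃(ℓ) for all ℓ ∈ ℤ. For each integer n with 1 ≤ n ≤ 𝒩, let uⁿ : ℤ → ℝ satisfy |uⁿ(ℓ)| ≤ C for all ℓ ∈ {−N†/2, …, N†/2 − 1}, and define the wrap-around error at step n by e_wrapⁿ = max over m ∈ {−N/2, …, N/2 − 1} of Δx · ∑_{ℓ = −N†/2}^{N†/2 − 1} |g̃(m − ℓ) · uⁿ(ℓ)| · 1{ (m − ℓ) < −N†/2 or (m − ℓ) > N†/2 − 1 }. If Δx · ( ∑_{ℓ = −N†/2}^{−N/2 − 1} |g̃(ℓ)| + ∑_{ℓ = N/2}^{N†/2 − 1} |g̃(ℓ)| ) ≤ ε_e · Δτ, then e_wrapⁿ ≤ C · ε_e · Δτ for every n, and consequently ∑_{n=1}^{𝒩} e_wrapⁿ ≤ T · C · ε_e, where T = 𝒩 ·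 Δτ. -/
/-- One-dimensional wrap-around error theorem (Theorem A.2):
with padding factor two (`N† = 2N`), if the grid-scaled mass of the kernel
on the padded region is at most `εe * Δτ`, then the wrap-around error at
each step is at most `C * εe * Δτ`, and the total over `𝒩` steps is at most
`T * C * εe` with `T = 𝒩 * Δτ`. -/
theorem wrap_around_error_1d
    (N : ℤ) (hN : 0 < N) (hNeven : Even N)
    (Δx Δτ C εe : ℝ) (hΔx : 0 < Δx) (hΔτ : 0 < Δτ) (hC : 0 ≤ C) (hεe : 0 ≤ εe)
    (g : ℤ → ℝ) (hper : ∀ ℓ : ℤ, g (ℓ + 2 * N) = g ℓ)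
    (𝒩 : ℕ) (u : ℕ → ℤ → ℝ)
    (hu : ∀ n ∈ Finset.Icc 1 𝒩, ∀ ℓ ∈ Finset.Icc (-N) (N - 1), |u n ℓ| ≤ C)
    (ewrap : ℕ → ℝ)
    (hewrap : ∀ n : ℕ, ewrap n =
      (Finset.Icc (-(N / 2)) (N / 2 - 1)).sup'
        (Finset.nonempty_Icc.mpr (by obtain ⟨k, hk⟩ := hNeven; omega))
        (fun m => Δx * ∑ ℓ ∈ Finset.Icc (-N) (N - 1),
          (if m - ℓ < -N ∨ N - 1 < m - ℓ then |g (m - ℓ) * u n ℓ| else 0)))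
    (hbound : Δx * ((∑ ℓ ∈ Finset.Icc (-N) (-(N / 2) - 1), |g ℓ|) +
        ∑ ℓ ∈ Finset.Icc (N / 2) (N - 1), |g ℓ|) ≤ εe * Δτ) :
    (∀ n ∈ Finset.Icc 1 𝒩, ewrap n ≤ C * εe * Δτ) ∧
      (∑ n ∈ Finset.Icc 1 𝒩, ewrap n ≤ ((𝒩 : ℝ) * Δτ) * C * εe) := by
  obtain ⟨k, hk⟩ := hNeven
  have hK : N / 2 = k := by omega
  have habs : ∀ x : ℤ, |g (x + 2 * N)| = |g x| := fun x => by rw [hper]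
  set T : ℝ := (∑ ℓ ∈ Finset.Icc (-N) (-(N / 2) - 1), |g ℓ|) +
      ∑ ℓ ∈ Finset.Icc (N / 2) (N - 1), |g ℓ| with hT
  have key : ∀ n ∈ Finset.Icc 1 𝒩, ewrap n ≤ C * εe * Δτ := by
    intro n hn
    rw [hewrap n]
    apply Finset.sup'_le
    intro m hm
    simp only [Finset.mem_Icc, hK] at hm
    -- bound the inner sum
    have hstep : (∑ ℓ ∈ Finset.Icc (-N) (N - 1),
        (if m - ℓ < -N ∨ N - 1 < m - ℓ then |g (m - ℓ) * u n ℓ| else 0))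
        ≤ C * T := by
      have h1 : (∑ ℓ ∈ Finset.Icc (-N) (N - 1),
          (if m - ℓ < -N ∨ N - 1 < m - ℓ then |g (m - ℓ) * u n ℓ| else 0))
          ≤ ∑ ℓ ∈ Finset.Icc (-N) (N - 1),
          (if m - ℓ < -N ∨ N - 1 < m - ℓ then C * |g (m - ℓ)| else 0) := by
        apply Finset.sum_le_sum
        intro ℓ hℓ
        split
        · rw [abs_mul, mul_comm]
          exact mul_le_mul_of_nonneg_right (hu n hn ℓ hℓ) (abs_nonneg _)
        · exact le_refl 0
      have h2 : (∑ ℓ ∈ Finset.Icc (-N) (N - 1),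
          (if m - ℓ < -N ∨ N - 1 < m - ℓ then C * |g (m - ℓ)| else 0))
          = C * ∑ ℓ ∈ (Finset.Icc (-N) (m - N) ∪ Finset.Icc (m + N + 1) (N - 1)),
            |g (m - ℓ)| := by
        rw [Finset.sum_ite, Finset.sum_const_zero, add_zero, ← Finset.mul_sum]
        congr 1
        apply Finset.sum_congr _ (fun _ _ => rfl)
        ext ℓ
        simp only [Finset.mem_filter, Finset.mem_Icc, Finset.mem_union]
        omega
      have hdisj : Disjoint (Finset.Icc (-N) (m - N)) (Finset.Icc (m + N + 1) (N - 1)) := by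
        rw [Finset.disjoint_left]
        intro a ha hb
        simp only [Finset.mem_Icc] at ha hb
        omega
      have e1 : (∑ ℓ ∈ Finset.Icc (-N) (m - N), |g (m - ℓ)|)
          = ∑ ℓ ∈ Finset.Icc (-N) (m - N), |g ℓ| := by
        apply Finset.sum_nbij' (fun ℓ => m - ℓ - 2 * N) (fun ℓ => m - ℓ - 2 * N)
        · intro a ha; simp only [Finset.mem_Icc] at *; omega
        · intro a ha; simp only [Finset.mem_Icc] at *; omega
        · intro a _; ring
        · intro a _; ring
        · intro a _
          rw [show m - a = (m - a - 2 * N) + 2 * N by ring, habs]; ring_nf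
      have e2 : (∑ ℓ ∈ Finset.Icc (m + N + 1) (N - 1), |g (m - ℓ)|)
          = ∑ ℓ ∈ Finset.Icc (m + N + 1) (N - 1), |g ℓ| := by
        apply Finset.sum_nbij' (fun ℓ => m - ℓ + 2 * N) (fun ℓ => m - ℓ + 2 * N)
        · intro a ha; simp only [Finset.mem_Icc] at *; omega
        · intro a ha; simp only [Finset.mem_Icc] at *; omega
        · intro a _; ring
        · intro a _; ring
        · intro a _
          rw [show m - a + 2 * N = (m - a) + 2 * N by ring, habs]
      have s1 : (∑ ℓ ∈ Finset.Icc (-N) (m - N), |g ℓ|)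
          ≤ ∑ ℓ ∈ Finset.Icc (-N) (-(N / 2) - 1), |g ℓ| := by
        apply Finset.sum_le_sum_of_subset_of_nonneg
        · apply Finset.Icc_subset_Icc le_rfl; omega
        · intro _ _ _; exact abs_nonneg _
      have s2 : (∑ ℓ ∈ Finset.Icc (m + N + 1) (N - 1), |g ℓ|)
          ≤ ∑ ℓ ∈ Finset.Icc (N / 2) (N - 1), |g ℓ| := by
        apply Finset.sum_le_sum_of_subset_of_nonneg
        · apply Finset.Icc_subset_Icc _ le_rfl; omega
        · intro _ _ _; exact abs_nonneg _
      calc (∑ ℓ ∈ Finset.Icc (-N) (N - 1),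
            (if m - ℓ < -N ∨ N - 1 < m - ℓ then |g (m - ℓ) * u n ℓ| else 0))
          ≤ C * ∑ ℓ ∈ (Finset.Icc (-N) (m - N) ∪ Finset.Icc (m + N + 1) (N - 1)),
              |g (m - ℓ)| := h1.trans_eq h2
        _ = C * ((∑ ℓ ∈ Finset.Icc (-N) (m - N), |g (m - ℓ)|) +
              ∑ ℓ ∈ Finset.Icc (m + N + 1) (N - 1), |g (m - ℓ)|) := by
            rw [Finset.sum_union hdisj]
        _ ≤ C * T := by
            rw [e1, e2, hT]
            exact mul_le_mul_of_nonneg_left (add_le_add s1 s2) hC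
    calc Δx * ∑ ℓ ∈ Finset.Icc (-N) (N - 1),
          (if m - ℓ < -N ∨ N - 1 < m - ℓ then |g (m - ℓ) * u n ℓ| else 0)
        ≤ Δx * (C * T) := mul_le_mul_of_nonneg_left hstep hΔx.le
      _ = C * (Δx * T) := by ring
      _ ≤ C * (εe * Δτ) := mul_le_mul_of_nonneg_left hbound hC
      _ = C * εe * Δτ := by ring
  refine ⟨key, ?_⟩
  calc (∑ n ∈ Finset.Icc 1 𝒩, ewrap n) ≤ ∑ _n ∈ Finset.Icc 1 𝒩, C * εe * Δτ :=
        Finset.sum_le_sum key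
    _ = (𝒩 : ℝ) * (C * εe * Δτ) := by
        rw [Finset.sum_const, Nat.card_Icc]
        simp [nsmul_eq_mul]
    _ = ((𝒩 : ℝ) * Δτ) * C * εe := by ring
end

section
/- Let N₁ and N₂ be positive integers, Δx₁, Δx₂ > 0, Δτ > 0, T > 0, δ ≥ 0, K ≥ 0, and let g̃ : (ℤ/N₁ℤ) × (ℤ/N₂ℤ) → ℝ satisfy Δx₁ Δx₂ · ∑_{(j,k)} max(−g̃(j, k), 0) ≤ δ · Δτ / T. For w : (ℤ/N₁ℤ) × (ℤ/N₂ℤ) → ℝ define (G w)(ℓ, m) = Δx₁ Δx₂ · ∑_{(j,k)} g̃(ℓ − j, m − k) · w(j, k). If v, u : (ℤ/N₁ℤ) × (ℤ/N₂ℤ) → ℝ satisfy u(j, k) ≤ v(j, k) ≤ u(j, k) + K for all (j, k), then (G v)(ℓ, m) − (G u)(ℓ, m) ≥ −K · δ · Δτ / T for all (ℓ, m). -/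
/-!
Write each weight as `g = g⁺ - g⁻`. Since `0 ≤ v - u ≤ K`, the difference
`G v - G u = Δx₁ Δx₂ ∑ g (ℓm - j) (v - u) j` can be pushed below zero only by the terms with
`g < 0`, and these contribute at least `-K` times the negative mass of `g`. Reindexing by
`j ↦ ℓm - j` shows that this mass does not depend on `ℓm`, so the hypothesis bounds it.
-/

section NegPart

variable {R : Type*} [Ring R] [LinearOrder R] [IsOrderedRing R]

lemma neg_negPart_mul_le_mul (c : R) {d K : R} (hd : 0 ≤ d) (hdK : d ≤ K) :
    -(c⁻ * K) ≤ c * d :=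
  calc -(c⁻ * K) ≤ -c⁻ * d := by
        rw [neg_mul]; exact neg_le_neg (mul_le_mul_of_nonneg_left hdK (negPart_nonneg c))
    _ ≤ c * d := mul_le_mul_of_nonneg_right (neg_le.mp (neg_le_negPart c)) hd

lemma neg_sum_negPart_mul_le_sum_mul {ι : Type*} (s : Finset ι) (c d : ι → R) {K : R}
    (hd : ∀ i ∈ s, 0 ≤ d i) (hdK : ∀ i ∈ s, d i ≤ K) :
    -((∑ i ∈ s, (c i)⁻) * K) ≤ ∑ i ∈ s, c i * d i := by
  rw [Finset.sum_mul, ← Finset.sum_neg_distrib]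
  exact Finset.sum_le_sum fun i hi => neg_negPart_mul_le_mul (c i) (hd i hi) (hdK i hi)

lemma neg_sum_negPart_mul_le_conv_sub {G : Type*} [AddCommGroup G] [Fintype G]
    (g u v : G → R) {K : R} (huv : ∀ j, u j ≤ v j ∧ v j ≤ u j + K) (x : G) :
    -((∑ j, (g j)⁻) * K) ≤ ∑ j, g (x - j) * v j - ∑ j, g (x - j) * u j := by
  rw [← Finset.sum_sub_distrib,
    ← Fintype.sum_equiv (Equiv.subLeft x) (fun j => (g (x - j))⁻) _ fun _ => rfl]
  simp only [← mul_sub]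
  exact neg_sum_negPart_mul_le_sum_mul _ _ _ (fun j _ => sub_nonneg.mpr (huv j).1)
    (fun j _ => sub_le_iff_le_add'.mpr (huv j).2)

end NegPart

theorem delta_monotonicity_general
    (N₁ N₂ : ℕ) [NeZero N₁] [NeZero N₂]
    (Δx₁ Δx₂ Δτ T δ K : ℝ)
    (hΔx₁ : 0 < Δx₁) (hΔx₂ : 0 < Δx₂)
    (hK : 0 ≤ K)
    (g : ZMod N₁ × ZMod N₂ → ℝ)
    (hneg : Δx₁ * Δx₂ * ∑ jk : ZMod N₁ × ZMod N₂, max (-g jk) 0 ≤ δ * Δτ / T)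
    (v u : ZMod N₁ × ZMod N₂ → ℝ)
    (hvu : ∀ jk : ZMod N₁ × ZMod N₂, u jk ≤ v jk ∧ v jk ≤ u jk + K) :
    ∀ ℓm : ZMod N₁ × ZMod N₂,
      Δx₁ * Δx₂ * ∑ jk : ZMod N₁ × ZMod N₂, g (ℓm.1 - jk.1, ℓm.2 - jk.2) * v jk -
        Δx₁ * Δx₂ * ∑ jk : ZMod N₁ × ZMod N₂, g (ℓm.1 - jk.1, ℓm.2 - jk.2) * u jk ≥
          -(K * δ * Δτ / T) := by
  intro ℓm
  have hgap := neg_sum_negPart_mul_le_conv_sub g u v hvu ℓm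
  have hmass : K * (Δx₁ * Δx₂ * ∑ jk, (g jk)⁻) ≤ K * (δ * Δτ / T) :=
    mul_le_mul_of_nonneg_left hneg hK
  rw [ge_iff_le, ← mul_sub]
  calc -(K * δ * Δτ / T) ≤ Δx₁ * Δx₂ * -((∑ jk, (g jk)⁻) * K) := by
        linear_combination hmass
    _ ≤ _ := mul_le_mul_of_nonneg_left hgap (by positivity)

/-- δ-monotonicity of the truncated Fourier time-advance operator: if the
grid-scaled mass of the negative parts of the weights is at most `δ Δτ / T`,
then one application of the circular convolution operator violates the
discrete comparison principle by at most `K δ Δτ / T`, where `K` bounds the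
pointwise gap between the two ordered solutions. -/
theorem delta_monotonicity
    (N₁ N₂ : ℕ) [NeZero N₁] [NeZero N₂]
    (Δx₁ Δx₂ Δτ T δ K : ℝ)
    (hΔx₁ : 0 < Δx₁) (hΔx₂ : 0 < Δx₂) (hΔτ : 0 < Δτ) (hT : 0 < T)
    (hδ : 0 ≤ δ) (hK : 0 ≤ K)
    (g : ZMod N₁ × ZMod N₂ → ℝ)
    (hneg : Δx₁ * Δx₂ * ∑ jk : ZMod N₁ × ZMod N₂, max (-g jk) 0 ≤ δ * Δτ / T)
    (v u : ZMod N₁ × ZMod N₂ → ℝ)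
    (hvu : ∀ jk : ZMod N₁ × ZMod N₂, u jk ≤ v jk ∧ v jk ≤ u jk + K) :
    ∀ ℓm : ZMod N₁ × ZMod N₂,
      Δx₁ * Δx₂ * ∑ jk : ZMod N₁ × ZMod N₂, g (ℓm.1 - jk.1, ℓm.2 - jk.2) * v jk -
        Δx₁ * Δx₂ * ∑ jk : ZMod N₁ × ZMod N₂, g (ℓm.1 - jk.1, ℓm.2 - jk.2) * u jk ≥
          -(K * δ * Δτ / T) :=
  delta_monotonicity_general N₁ N₂ Δx₁ Δx₂ Δτ T δ K hΔx₁ hΔx₂ hK g hneg v u hvu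
end
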